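/- arXiv:1901.05785 — 13 statements merged into one kernel-verified Lean document; each statement's English description precedes it below -/
import Mathlib

section
/- Let q1, q2, r1, r2 be elements of a commutative ring (e.g. integers). Set p1 = (r1-r2)^2, p2 = (q1-q2)^2, and define x1 = p1·q1^2, x2 = p1·q2^2, x3 = x4 = p2·r1·r2, y1 = p2·r1^2, y2 = p2·r2^2, y3 = y4 = p1·q1·q2. Then x1+x2+x3+x4 = y1+y2+y3+y4 and x1·x2·x3·x4 = y1·y2·y3·y4 = (p1·q1·q2·p2·r1·r2)^2, a perfect square. -/
theorem equal_sum_equal_square_product_quadruples (R : Type*) [CommRing R]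
    (q1 q2 r1 r2 : R)
    (p1 p2 x1 x2 x3 x4 y1 y2 y3 y4 : R)
    (hp1 : p1 = (r1 - r2) ^ 2) (hp2 : p2 = (q1 - q2) ^ 2)
    (hx1 : x1 = p1 * q1 ^ 2) (hx2 : x2 = p1 * q2 ^ 2)
    (hx3 : x3 = p2 * r1 * r2) (hx4 : x4 = p2 * r1 * r2)
    (hy1 : y1 = p2 * r1 ^ 2) (hy2 : y2 = p2 * r2 ^ 2)
    (hy3 : y3 = p1 * q1 * q2) (hy4 : y4 = p1 * q1 * q2) :
    x1 + x2 + x3 + x4 = y1 + y2 + y3 + y4 ∧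
    x1 * x2 * x3 * x4 = y1 * y2 * y3 * y4 ∧
    x1 * x2 * x3 * x4 = (p1 * q1 * q2 * p2 * r1 * r2) ^ 2 := by
  subst hp1 hp2 hx1 hx2 hx3 hx4 hy1 hy2 hy3 hy4
  refine ⟨by ring, by ring, by ring⟩
end

section
/- Let q1, q2, r1, r2 be elements of a commutative ring. Define phi(q1,q2,r1,r2) = r1^2r2^2q1^4 - 4r1^2r2^2q1^3q2 + (r1^4 - 4r1^3r2 + 12r1^2r2^2 - 4r1r2^3 + r2^4)q1^2q2^2 - 4r1^2r2^2q1q2^3 + r1^2r2^2q2^4. Set p1 = (r1-r2)^2, p2 = (q1-q2)^2, x1 = p1q1^2, x2 = p1q2^2, x3 = x4 = p2r1r2, y1 = p2r1^2, y2 = p2r2^2, y3 = y4 = p1q1q2. Then (x1x2+x3x4)(x1x3+x2x4)(x1x4+x2x3) = (q1-q2)^4(q1^2+q2^2)^2·r1^2r2^2·(r1-r2)^4·phi(q1,q2,r1,r2) and (y1y2+y3y4)(y1y3+y2y4)(y1y4+y2y3) = q1^2q2^2(q1-q2)^4(r1-r2)^4(r1^2+r2^2)^2·phi(q1,q2,r1,r2).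 -/
theorem diagonal_products_reduce_to_phi (R : Type*) [CommRing R]
    (q1 q2 r1 r2 : R)
    (phi p1 p2 x1 x2 x3 x4 y1 y2 y3 y4 : R)
    (hphi : phi = r1 ^ 2 * r2 ^ 2 * q1 ^ 4 - 4 * r1 ^ 2 * r2 ^ 2 * q1 ^ 3 * q2
      + (r1 ^ 4 - 4 * r1 ^ 3 * r2 + 12 * r1 ^ 2 * r2 ^ 2 - 4 * r1 * r2 ^ 3 + r2 ^ 4)
        * q1 ^ 2 * q2 ^ 2
      - 4 * r1 ^ 2 * r2 ^ 2 * q1 * q2 ^ 3 + r1 ^ 2 * r2 ^ 2 * q2 ^ 4)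
    (hp1 : p1 = (r1 - r2) ^ 2) (hp2 : p2 = (q1 - q2) ^ 2)
    (hx1 : x1 = p1 * q1 ^ 2) (hx2 : x2 = p1 * q2 ^ 2)
    (hx3 : x3 = p2 * r1 * r2) (hx4 : x4 = p2 * r1 * r2)
    (hy1 : y1 = p2 * r1 ^ 2) (hy2 : y2 = p2 * r2 ^ 2)
    (hy3 : y3 = p1 * q1 * q2) (hy4 : y4 = p1 * q1 * q2) :
    (x1 * x2 + x3 * x4) * (x1 * x3 + x2 * x4) * (x1 * x4 + x2 * x3)
      = (q1 - q2) ^ 4 * (q1 ^ 2 + q2 ^ 2) ^ 2 * r1 ^ 2 * r2 ^ 2 * (r1 - r2) ^ 4 * phi ∧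
    (y1 * y2 + y3 * y4) * (y1 * y3 + y2 * y4) * (y1 * y4 + y2 * y3)
      = q1 ^ 2 * q2 ^ 2 * (q1 - q2) ^ 4 * (r1 - r2) ^ 4 * (r1 ^ 2 + r2 ^ 2) ^ 2 * phi := by
  subst hphi hp1 hp2 hx1 hx2 hx3 hx4 hy1 hy2 hy3 hy4; constructor <;> ring
end

section
/- Let r1, r2 be integers and define phi(q1,q2,r1,r2) = r1^2r2^2q1^4 - 4r1^2r2^2q1^3q2 + (r1^4 - 4r1^3r2 + 12r1^2r2^2 - 4r1r2^3 + r2^4)q1^2q2^2 - 4r1^2r2^2q1q2^3 + r1^2r2^2q2^4. If q1 = 8r1^2r2^2 and q2 = r1^4 - 4r1^3r2 + 10r1^2r2^2 - 4r1r2^3 + r2^4, then there exists an integer s such that phi(q1,q2,r1,r2) = s^2. -/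
theorem fermat_values_make_phi_square (r1 r2 q1 q2 : ℤ)
    (hq1 : q1 = 8 * r1 ^ 2 * r2 ^ 2)
    (hq2 : q2 = r1 ^ 4 - 4 * r1 ^ 3 * r2 + 10 * r1 ^ 2 * r2 ^ 2 - 4 * r1 * r2 ^ 3 + r2 ^ 4) :
    ∃ s : ℤ,
      r1 ^ 2 * r2 ^ 2 * q1 ^ 4 - 4 * r1 ^ 2 * r2 ^ 2 * q1 ^ 3 * q2
        + (r1 ^ 4 - 4 * r1 ^ 3 * r2 + 12 * r1 ^ 2 * r2 ^ 2 - 4 * r1 * r2 ^ 3 + r2 ^ 4)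
          * q1 ^ 2 * q2 ^ 2
        - 4 * r1 ^ 2 * r2 ^ 2 * q1 * q2 ^ 3 + r1 ^ 2 * r2 ^ 2 * q2 ^ 4 = s ^ 2 := by
  subst hq1 hq2
  exact ⟨r1 ^ 9 * r2 - 8 * r1 ^ 8 * r2 ^ 2 + 52 * r1 ^ 7 * r2 ^ 3 - 152 * r1 ^ 6 * r2 ^ 4
    + 230 * r1 ^ 5 * r2 ^ 5 - 152 * r1 ^ 4 * r2 ^ 6 + 52 * r1 ^ 3 * r2 ^ 7
    - 8 * r1 ^ 2 * r2 ^ 8 + r1 * r2 ^ 9, by ring⟩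
end

section
/- Given integers r1, r2, define: a1 = (r1^2+r2^2)(r1^2-4r1r2+r2^2)(r1^6-4r1^5r2+19r1^4r2^2-40r1^3r2^3+19r1^2r2^4-4r1r2^5+r2^6); a2 = -(r1^2+r2^2)(r1^2-4r1r2+r2^2)(r1^6-8r1^5r2+35r1^4r2^2-48r1^3r2^3+35r1^2r2^4-8r1r2^5+r2^6); a3 = a4 = (r1-r2)^2(r1^8-8r1^7r2+36r1^6r2^2-88r1^5r2^3+198r1^4r2^4-88r1^3r2^5+36r1^2r2^6-8r1r2^7+r2^8); b1 = -(r1-r2)(r1^4-8r1^3r2+10r1^2r2^2+r2^4)(r1^5+r1^4r2-6r1^3r2^2+18r1^2r2^3-7r1r2^4+r2^5); b2 = (r1-r2)(r1^4+10r1^2r2^2-8r1r2^3+r2^4)(r1^5-7r1^4r2+18r1^3r2^2-6r1^2r2^3+r1r2^4+r2^5); b3 = b4 = (r1^2-4r1r2+r2^2)^2(r1^2+r2^2)^3. Let K = 32r1^3r2^3(r1-r2)^2(r1^2+r2^2)^2(r1^2-4r1r2+r2^2)^2(r1^4-4r1^3r2+10r1^2r2^2-4r1r2^3+r2^4). Then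 (a1-a2+a3+a4)(a1+a2-a3+a4)(a1+a2+a3-a4)(-a1+a2+a3+a4) = (b1-b2+b3+b4)(b1+b2-b3+b4)(b1+b2+b3-b4)(-b1+b2+b3+b4) = 16K^2. -/
theorem section21_equal_areas (r1 r2 : ℤ) (a1 a2 a3 a4 b1 b2 b3 b4 K : ℤ)
    (ha1 : a1 = (r1 ^ 2 + r2 ^ 2) * (r1 ^ 2 - 4 * r1 * r2 + r2 ^ 2)
      * (r1 ^ 6 - 4 * r1 ^ 5 * r2 + 19 * r1 ^ 4 * r2 ^ 2 - 40 * r1 ^ 3 * r2 ^ 3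
        + 19 * r1 ^ 2 * r2 ^ 4 - 4 * r1 * r2 ^ 5 + r2 ^ 6))
    (ha2 : a2 = -((r1 ^ 2 + r2 ^ 2) * (r1 ^ 2 - 4 * r1 * r2 + r2 ^ 2)
      * (r1 ^ 6 - 8 * r1 ^ 5 * r2 + 35 * r1 ^ 4 * r2 ^ 2 - 48 * r1 ^ 3 * r2 ^ 3
        + 35 * r1 ^ 2 * r2 ^ 4 - 8 * r1 * r2 ^ 5 + r2 ^ 6)))
    (ha3 : a3 = (r1 - r2) ^ 2
      * (r1 ^ 8 - 8 * r1 ^ 7 * r2 + 36 * r1 ^ 6 * r2 ^ 2 - 88 * r1 ^ 5 * r2 ^ 3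
        + 198 * r1 ^ 4 * r2 ^ 4 - 88 * r1 ^ 3 * r2 ^ 5 + 36 * r1 ^ 2 * r2 ^ 6
        - 8 * r1 * r2 ^ 7 + r2 ^ 8))
    (ha4 : a4 = a3)
    (hb1 : b1 = -((r1 - r2) * (r1 ^ 4 - 8 * r1 ^ 3 * r2 + 10 * r1 ^ 2 * r2 ^ 2 + r2 ^ 4)
      * (r1 ^ 5 + r1 ^ 4 * r2 - 6 * r1 ^ 3 * r2 ^ 2 + 18 * r1 ^ 2 * r2 ^ 3
        - 7 * r1 * r2 ^ 4 + r2 ^ 5)))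
    (hb2 : b2 = (r1 - r2) * (r1 ^ 4 + 10 * r1 ^ 2 * r2 ^ 2 - 8 * r1 * r2 ^ 3 + r2 ^ 4)
      * (r1 ^ 5 - 7 * r1 ^ 4 * r2 + 18 * r1 ^ 3 * r2 ^ 2 - 6 * r1 ^ 2 * r2 ^ 3
        + r1 * r2 ^ 4 + r2 ^ 5))
    (hb3 : b3 = (r1 ^ 2 - 4 * r1 * r2 + r2 ^ 2) ^ 2 * (r1 ^ 2 + r2 ^ 2) ^ 3)
    (hb4 : b4 = b3)
    (hK : K = 32 * r1 ^ 3 * r2 ^ 3 * (r1 - r2) ^ 2 * (r1 ^ 2 + r2 ^ 2) ^ 2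
      * (r1 ^ 2 - 4 * r1 * r2 + r2 ^ 2) ^ 2
      * (r1 ^ 4 - 4 * r1 ^ 3 * r2 + 10 * r1 ^ 2 * r2 ^ 2 - 4 * r1 * r2 ^ 3 + r2 ^ 4)) :
    (a1 - a2 + a3 + a4) * (a1 + a2 - a3 + a4) * (a1 + a2 + a3 - a4) *
      (-a1 + a2 + a3 + a4) = 16 * K ^ 2 ∧
    (b1 - b2 + b3 + b4) * (b1 + b2 - b3 + b4) * (b1 + b2 + b3 - b4) *
      (-b1 + b2 + b3 + b4) = 16 * K ^ 2 := by
  subst ha1 ha2 ha3 ha4 hb1 hb2 hb3 hb4 hK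
  constructor <;> ring
end

section
/- Given integers r1, r2, define a1 = (r1^2+r2^2)(r1^2-4r1r2+r2^2)(r1^6-4r1^5r2+19r1^4r2^2-40r1^3r2^3+19r1^2r2^4-4r1r2^5+r2^6); a2 = -(r1^2+r2^2)(r1^2-4r1r2+r2^2)(r1^6-8r1^5r2+35r1^4r2^2-48r1^3r2^3+35r1^2r2^4-8r1r2^5+r2^6); a3 = a4 = (r1-r2)^2(r1^8-8r1^7r2+36r1^6r2^2-88r1^5r2^3+198r1^4r2^4-88r1^3r2^5+36r1^2r2^6-8r1r2^7+r2^8). Let d1 = 2r1r2(r1^8-8r1^7r2+52r1^6r2^2-152r1^5r2^3+230r1^4r2^4-152r1^3r2^5+52r1^2r2^6-8r1r2^7+r2^8). Then d1^2·(a1·a4+a2·a3) = (a1·a2+a3·a4)(a1·a3+a2·a4), and consequently (a1·a2+a3·a4)(a1·a3+a2·a4)(a1·a4+a2·a3) = (d1·(a1·a4+a2·a3))^2. -/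
theorem section21_first_quadrilateral_diagonal (r1 r2 : ℤ) (a1 a2 a3 a4 d1 : ℤ)
    (ha1 : a1 = (r1 ^ 2 + r2 ^ 2) * (r1 ^ 2 - 4 * r1 * r2 + r2 ^ 2)
      * (r1 ^ 6 - 4 * r1 ^ 5 * r2 + 19 * r1 ^ 4 * r2 ^ 2 - 40 * r1 ^ 3 * r2 ^ 3
        + 19 * r1 ^ 2 * r2 ^ 4 - 4 * r1 * r2 ^ 5 + r2 ^ 6))
    (ha2 : a2 = -((r1 ^ 2 + r2 ^ 2) * (r1 ^ 2 - 4 * r1 * r2 + r2 ^ 2)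
      * (r1 ^ 6 - 8 * r1 ^ 5 * r2 + 35 * r1 ^ 4 * r2 ^ 2 - 48 * r1 ^ 3 * r2 ^ 3
        + 35 * r1 ^ 2 * r2 ^ 4 - 8 * r1 * r2 ^ 5 + r2 ^ 6)))
    (ha3 : a3 = (r1 - r2) ^ 2
      * (r1 ^ 8 - 8 * r1 ^ 7 * r2 + 36 * r1 ^ 6 * r2 ^ 2 - 88 * r1 ^ 5 * r2 ^ 3
        + 198 * r1 ^ 4 * r2 ^ 4 - 88 * r1 ^ 3 * r2 ^ 5 + 36 * r1 ^ 2 * r2 ^ 6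
        - 8 * r1 * r2 ^ 7 + r2 ^ 8))
    (ha4 : a4 = a3)
    (hd1 : d1 = 2 * r1 * r2 * (r1 ^ 8 - 8 * r1 ^ 7 * r2 + 52 * r1 ^ 6 * r2 ^ 2
      - 152 * r1 ^ 5 * r2 ^ 3 + 230 * r1 ^ 4 * r2 ^ 4 - 152 * r1 ^ 3 * r2 ^ 5
      + 52 * r1 ^ 2 * r2 ^ 6 - 8 * r1 * r2 ^ 7 + r2 ^ 8))
    :
    d1 ^ 2 * (a1 * a4 + a2 * a3) = (a1 * a2 + a3 * a4) * (a1 * a3 + a2 * a4) ∧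
    (a1 * a2 + a3 * a4) * (a1 * a3 + a2 * a4) * (a1 * a4 + a2 * a3)
      = (d1 * (a1 * a4 + a2 * a3)) ^ 2 := by
  subst ha1 ha2 ha3 ha4 hd1
  constructor <;> ring
end

section
/- Given integers r1, r2, define b1 = -(r1-r2)(r1^4-8r1^3r2+10r1^2r2^2+r2^4)(r1^5+r1^4r2-6r1^3r2^2+18r1^2r2^3-7r1r2^4+r2^5); b2 = (r1-r2)(r1^4+10r1^2r2^2-8r1r2^3+r2^4)(r1^5-7r1^4r2+18r1^3r2^2-6r1^2r2^3+r1r2^4+r2^5); b3 = b4 = (r1^2-4r1r2+r2^2)^2(r1^2+r2^2)^3. Let d1 = 2r1r2(r1^8-8r1^7r2+52r1^6r2^2-152r1^5r2^3+230r1^4r2^4-152r1^3r2^5+52r1^2r2^6-8r1r2^7+r2^8). Then d1^2·(b1·b4+b2·b3) = (b1·b2+b3·b4)(b1·b3+b2·b4), and consequently (b1·b2+b3·b4)(b1·b3+b2·b4)(b1·b4+b2·b3) = (d1·(b1·b4+b2·b3))^2. -/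
theorem section21_second_quadrilateral_diagonal (r1 r2 : ℤ) (b1 b2 b3 b4 d1 : ℤ)
    (hb1 : b1 = -((r1 - r2) * (r1 ^ 4 - 8 * r1 ^ 3 * r2 + 10 * r1 ^ 2 * r2 ^ 2 + r2 ^ 4)
      * (r1 ^ 5 + r1 ^ 4 * r2 - 6 * r1 ^ 3 * r2 ^ 2 + 18 * r1 ^ 2 * r2 ^ 3
        - 7 * r1 * r2 ^ 4 + r2 ^ 5)))
    (hb2 : b2 = (r1 - r2) * (r1 ^ 4 + 10 * r1 ^ 2 * r2 ^ 2 - 8 * r1 * r2 ^ 3 + r2 ^ 4)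
      * (r1 ^ 5 - 7 * r1 ^ 4 * r2 + 18 * r1 ^ 3 * r2 ^ 2 - 6 * r1 ^ 2 * r2 ^ 3
        + r1 * r2 ^ 4 + r2 ^ 5))
    (hb3 : b3 = (r1 ^ 2 - 4 * r1 * r2 + r2 ^ 2) ^ 2 * (r1 ^ 2 + r2 ^ 2) ^ 3)
    (hb4 : b4 = b3)
    (hd1 : d1 = 2 * r1 * r2 * (r1 ^ 8 - 8 * r1 ^ 7 * r2 + 52 * r1 ^ 6 * r2 ^ 2
      - 152 * r1 ^ 5 * r2 ^ 3 + 230 * r1 ^ 4 * r2 ^ 4 - 152 * r1 ^ 3 * r2 ^ 5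
      + 52 * r1 ^ 2 * r2 ^ 6 - 8 * r1 * r2 ^ 7 + r2 ^ 8))
    :
    d1 ^ 2 * (b1 * b4 + b2 * b3) = (b1 * b2 + b3 * b4) * (b1 * b3 + b2 * b4) ∧
    (b1 * b2 + b3 * b4) * (b1 * b3 + b2 * b4) * (b1 * b4 + b2 * b3)
      = (d1 * (b1 * b4 + b2 * b3)) ^ 2 := by
  subst hb1 hb2 hb3 hb4 hd1
  constructor <;> ring
end

section
/- Given integers r1, r2, define b1 = -(r1-r2)(r1^4-8r1^3r2+10r1^2r2^2+r2^4)(r1^5+r1^4r2-6r1^3r2^2+18r1^2r2^3-7r1r2^4+r2^5); b2 = (r1-r2)(r1^4+10r1^2r2^2-8r1r2^3+r2^4)(r1^5-7r1^4r2+18r1^3r2^2-6r1^2r2^3+r1r2^4+r2^5); b3 = b4 = (r1^2-4r1r2+r2^2)^2(r1^2+r2^2)^3. Let K = 32r1^3r2^3(r1-r2)^2(r1^2+r2^2)^2(r1^2-4r1r2+r2^2)^2(r1^4-4r1^3r2+10r1^2r2^2-4r1r2^3+r2^4) and let E = r1^8-8r1^7r2+52r1^6r2^2-152r1^5r2^3+230r1^4r2^4-152r1^3r2^5+52r1^2r2^6-8r1r2^7+r2^8.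 Then 4·K^2·(r1^2+r2^2)^2·E^2 = (b1·b2+b3·b4)(b1·b3+b2·b4)(b1·b4+b2·b3); equivalently, the circumradius R = (r1^2+r2^2)·E/2 of the second quadrilateral satisfies (4KR)^2 = (b1b2+b3b4)(b1b3+b2b4)(b1b4+b2b3). -/
set_option maxHeartbeats 2000000


theorem section21_second_quadrilateral_circumradius (r1 r2 : ℤ) (b1 b2 b3 b4 K E : ℤ)
    (hb1 : b1 = -((r1 - r2) * (r1 ^ 4 - 8 * r1 ^ 3 * r2 + 10 * r1 ^ 2 * r2 ^ 2 + r2 ^ 4)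
      * (r1 ^ 5 + r1 ^ 4 * r2 - 6 * r1 ^ 3 * r2 ^ 2 + 18 * r1 ^ 2 * r2 ^ 3
        - 7 * r1 * r2 ^ 4 + r2 ^ 5)))
    (hb2 : b2 = (r1 - r2) * (r1 ^ 4 + 10 * r1 ^ 2 * r2 ^ 2 - 8 * r1 * r2 ^ 3 + r2 ^ 4)
      * (r1 ^ 5 - 7 * r1 ^ 4 * r2 + 18 * r1 ^ 3 * r2 ^ 2 - 6 * r1 ^ 2 * r2 ^ 3
        + r1 * r2 ^ 4 + r2 ^ 5))
    (hb3 : b3 = (r1 ^ 2 - 4 * r1 * r2 + r2 ^ 2) ^ 2 * (r1 ^ 2 + r2 ^ 2) ^ 3)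
    (hb4 : b4 = b3)
    (hK : K = 32 * r1 ^ 3 * r2 ^ 3 * (r1 - r2) ^ 2 * (r1 ^ 2 + r2 ^ 2) ^ 2
      * (r1 ^ 2 - 4 * r1 * r2 + r2 ^ 2) ^ 2
      * (r1 ^ 4 - 4 * r1 ^ 3 * r2 + 10 * r1 ^ 2 * r2 ^ 2 - 4 * r1 * r2 ^ 3 + r2 ^ 4))
    (hE : E = r1 ^ 8 - 8 * r1 ^ 7 * r2 + 52 * r1 ^ 6 * r2 ^ 2 - 152 * r1 ^ 5 * r2 ^ 3
      + 230 * r1 ^ 4 * r2 ^ 4 - 152 * r1 ^ 3 * r2 ^ 5 + 52 * r1 ^ 2 * r2 ^ 6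
      - 8 * r1 * r2 ^ 7 + r2 ^ 8)
    :
    4 * K ^ 2 * (r1 ^ 2 + r2 ^ 2) ^ 2 * E ^ 2
      = (b1 * b2 + b3 * b4) * (b1 * b3 + b2 * b4) * (b1 * b4 + b2 * b3) ∧
    ∀ R : ℚ, R = ((r1 : ℚ) ^ 2 + (r2 : ℚ) ^ 2) * (E : ℚ) / 2 →
      (4 * (K : ℚ) * R) ^ 2
        = ((b1 : ℚ) * b2 + (b3 : ℚ) * b4) * ((b1 : ℚ) * b3 + (b2 : ℚ) * b4)
          * ((b1 : ℚ) * b4 + (b2 : ℚ) * b3) := by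
  subst hb4 hb3 hb2 hb1 hK hE
  have h : 4 * ((32:ℤ) * r1 ^ 3 * r2 ^ 3 * (r1 - r2) ^ 2 * (r1 ^ 2 + r2 ^ 2) ^ 2
      * (r1 ^ 2 - 4 * r1 * r2 + r2 ^ 2) ^ 2
      * (r1 ^ 4 - 4 * r1 ^ 3 * r2 + 10 * r1 ^ 2 * r2 ^ 2 - 4 * r1 * r2 ^ 3 + r2 ^ 4)) ^ 2 * (r1 ^ 2 + r2 ^ 2) ^ 2 * (r1 ^ 8 - 8 * r1 ^ 7 * r2 + 52 * r1 ^ 6 * r2 ^ 2 - 152 * r1 ^ 5 * r2 ^ 3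
      + 230 * r1 ^ 4 * r2 ^ 4 - 152 * r1 ^ 3 * r2 ^ 5 + 52 * r1 ^ 2 * r2 ^ 6
      - 8 * r1 * r2 ^ 7 + r2 ^ 8) ^ 2
      = ((-((r1 - r2) * (r1 ^ 4 - 8 * r1 ^ 3 * r2 + 10 * r1 ^ 2 * r2 ^ 2 + r2 ^ 4)
      * (r1 ^ 5 + r1 ^ 4 * r2 - 6 * r1 ^ 3 * r2 ^ 2 + 18 * r1 ^ 2 * r2 ^ 3
        - 7 * r1 * r2 ^ 4 + r2 ^ 5))) * ((r1 - r2) * (r1 ^ 4 + 10 * r1 ^ 2 * r2 ^ 2 - 8 * r1 * r2 ^ 3 + r2 ^ 4)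
      * (r1 ^ 5 - 7 * r1 ^ 4 * r2 + 18 * r1 ^ 3 * r2 ^ 2 - 6 * r1 ^ 2 * r2 ^ 3
        + r1 * r2 ^ 4 + r2 ^ 5)) + ((r1 ^ 2 - 4 * r1 * r2 + r2 ^ 2) ^ 2 * (r1 ^ 2 + r2 ^ 2) ^ 3) * ((r1 ^ 2 - 4 * r1 * r2 + r2 ^ 2) ^ 2 * (r1 ^ 2 + r2 ^ 2) ^ 3))
      * ((-((r1 - r2) * (r1 ^ 4 - 8 * r1 ^ 3 * r2 + 10 * r1 ^ 2 * r2 ^ 2 + r2 ^ 4)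
      * (r1 ^ 5 + r1 ^ 4 * r2 - 6 * r1 ^ 3 * r2 ^ 2 + 18 * r1 ^ 2 * r2 ^ 3
        - 7 * r1 * r2 ^ 4 + r2 ^ 5))) * ((r1 ^ 2 - 4 * r1 * r2 + r2 ^ 2) ^ 2 * (r1 ^ 2 + r2 ^ 2) ^ 3) + ((r1 - r2) * (r1 ^ 4 + 10 * r1 ^ 2 * r2 ^ 2 - 8 * r1 * r2 ^ 3 + r2 ^ 4)
      * (r1 ^ 5 - 7 * r1 ^ 4 * r2 + 18 * r1 ^ 3 * r2 ^ 2 - 6 * r1 ^ 2 * r2 ^ 3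
        + r1 * r2 ^ 4 + r2 ^ 5)) * ((r1 ^ 2 - 4 * r1 * r2 + r2 ^ 2) ^ 2 * (r1 ^ 2 + r2 ^ 2) ^ 3))
      * ((-((r1 - r2) * (r1 ^ 4 - 8 * r1 ^ 3 * r2 + 10 * r1 ^ 2 * r2 ^ 2 + r2 ^ 4)
      * (r1 ^ 5 + r1 ^ 4 * r2 - 6 * r1 ^ 3 * r2 ^ 2 + 18 * r1 ^ 2 * r2 ^ 3
        - 7 * r1 * r2 ^ 4 + r2 ^ 5))) * ((r1 ^ 2 - 4 * r1 * r2 + r2 ^ 2) ^ 2 * (r1 ^ 2 + r2 ^ 2) ^ 3) + ((r1 - r2) * (r1 ^ 4 + 10 * r1 ^ 2 * r2 ^ 2 - 8 * r1 * r2 ^ 3 + r2 ^ 4)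
      * (r1 ^ 5 - 7 * r1 ^ 4 * r2 + 18 * r1 ^ 3 * r2 ^ 2 - 6 * r1 ^ 2 * r2 ^ 3
        + r1 * r2 ^ 4 + r2 ^ 5)) * ((r1 ^ 2 - 4 * r1 * r2 + r2 ^ 2) ^ 2 * (r1 ^ 2 + r2 ^ 2) ^ 3)) := by
    ring
  refine ⟨h, ?_⟩
  intro R hR
  subst hR
  have h2 := congrArg (fun z : ℤ => (z : ℚ)) h
  push_cast at h2
  push_cast
  linear_combination h2
end

section
/- Given integers r1, r2, define a1 = (r1^2+r2^2)(r1^2-4r1r2+r2^2)(r1^6-4r1^5r2+19r1^4r2^2-40r1^3r2^3+19r1^2r2^4-4r1r2^5+r2^6); a2 = -(r1^2+r2^2)(r1^2-4r1r2+r2^2)(r1^6-8r1^5r2+35r1^4r2^2-48r1^3r2^3+35r1^2r2^4-8r1r2^5+r2^6); a3 = a4 = (r1-r2)^2(r1^8-8r1^7r2+36r1^6r2^2-88r1^5r2^3+198r1^4r2^4-88r1^3r2^5+36r1^2r2^6-8r1r2^7+r2^8). Let K = 32r1^3r2^3(r1-r2)^2(r1^2+r2^2)^2(r1^2-4r1r2+r2^2)^2(r1^4-4r1^3r2+10r1^2r2^2-4r1r2^3+r2^4),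 F = r1^8-8r1^7r2+36r1^6r2^2-88r1^5r2^3+198r1^4r2^4-88r1^3r2^5+36r1^2r2^6-8r1r2^7+r2^8, E = r1^8-8r1^7r2+52r1^6r2^2-152r1^5r2^3+230r1^4r2^4-152r1^3r2^5+52r1^2r2^6-8r1r2^7+r2^8, and Q = r1^4-4r1^3r2+10r1^2r2^2-4r1r2^3+r2^4. Then 16·K^2·F^2·E^2 = (a1·a2+a3·a4)(a1·a3+a2·a4)(a1·a4+a2·a3)·(16r1r2Q)^2; equivalently, when r1r2Q is nonzero, the circumradius R = F·E/(16r1r2Q) of the first quadrilateral satisfies (4KR)^2 = (a1a2+a3a4)(a1a3+a2a4)(a1a4+a2a3). -/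
theorem sq_four_mul_mul_div_eq_of_mul_sq_eq {k : Type*} [Field k] {K X D P : k} (hD : D ≠ 0)
    (h : 16 * K ^ 2 * X ^ 2 = P * D ^ 2) : (4 * K * (X / D)) ^ 2 = P := by
  field_simp
  linear_combination h

theorem section21_first_quadrilateral_circumradius (r1 r2 : ℤ) (a1 a2 a3 a4 K F E Q : ℤ)
    (ha1 : a1 = (r1 ^ 2 + r2 ^ 2) * (r1 ^ 2 - 4 * r1 * r2 + r2 ^ 2)
      * (r1 ^ 6 - 4 * r1 ^ 5 * r2 + 19 * r1 ^ 4 * r2 ^ 2 - 40 * r1 ^ 3 * r2 ^ 3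
        + 19 * r1 ^ 2 * r2 ^ 4 - 4 * r1 * r2 ^ 5 + r2 ^ 6))
    (ha2 : a2 = -((r1 ^ 2 + r2 ^ 2) * (r1 ^ 2 - 4 * r1 * r2 + r2 ^ 2)
      * (r1 ^ 6 - 8 * r1 ^ 5 * r2 + 35 * r1 ^ 4 * r2 ^ 2 - 48 * r1 ^ 3 * r2 ^ 3
        + 35 * r1 ^ 2 * r2 ^ 4 - 8 * r1 * r2 ^ 5 + r2 ^ 6)))
    (ha3 : a3 = (r1 - r2) ^ 2
      * (r1 ^ 8 - 8 * r1 ^ 7 * r2 + 36 * r1 ^ 6 * r2 ^ 2 - 88 * r1 ^ 5 * r2 ^ 3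
        + 198 * r1 ^ 4 * r2 ^ 4 - 88 * r1 ^ 3 * r2 ^ 5 + 36 * r1 ^ 2 * r2 ^ 6
        - 8 * r1 * r2 ^ 7 + r2 ^ 8))
    (ha4 : a4 = a3)
    (hK : K = 32 * r1 ^ 3 * r2 ^ 3 * (r1 - r2) ^ 2 * (r1 ^ 2 + r2 ^ 2) ^ 2
      * (r1 ^ 2 - 4 * r1 * r2 + r2 ^ 2) ^ 2
      * (r1 ^ 4 - 4 * r1 ^ 3 * r2 + 10 * r1 ^ 2 * r2 ^ 2 - 4 * r1 * r2 ^ 3 + r2 ^ 4))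
    (hE : E = r1 ^ 8 - 8 * r1 ^ 7 * r2 + 52 * r1 ^ 6 * r2 ^ 2 - 152 * r1 ^ 5 * r2 ^ 3
      + 230 * r1 ^ 4 * r2 ^ 4 - 152 * r1 ^ 3 * r2 ^ 5 + 52 * r1 ^ 2 * r2 ^ 6
      - 8 * r1 * r2 ^ 7 + r2 ^ 8)
    (hF : F = r1 ^ 8 - 8 * r1 ^ 7 * r2 + 36 * r1 ^ 6 * r2 ^ 2 - 88 * r1 ^ 5 * r2 ^ 3
      + 198 * r1 ^ 4 * r2 ^ 4 - 88 * r1 ^ 3 * r2 ^ 5 + 36 * r1 ^ 2 * r2 ^ 6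
      - 8 * r1 * r2 ^ 7 + r2 ^ 8)
    (hQ : Q = r1 ^ 4 - 4 * r1 ^ 3 * r2 + 10 * r1 ^ 2 * r2 ^ 2 - 4 * r1 * r2 ^ 3 + r2 ^ 4) :
    16 * K ^ 2 * F ^ 2 * E ^ 2
      = (a1 * a2 + a3 * a4) * (a1 * a3 + a2 * a4) * (a1 * a4 + a2 * a3)
        * (16 * r1 * r2 * Q) ^ 2 ∧
    (r1 * r2 * Q ≠ 0 →
      ∀ R : ℚ, R = (F : ℚ) * (E : ℚ) / (16 * (r1 : ℚ) * (r2 : ℚ) * (Q : ℚ)) →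
        (4 * (K : ℚ) * R) ^ 2
          = ((a1 : ℚ) * a2 + (a3 : ℚ) * a4) * ((a1 : ℚ) * a3 + (a2 : ℚ) * a4)
            * ((a1 : ℚ) * a4 + (a2 : ℚ) * a3)) := by
  have identity : 16 * K ^ 2 * F ^ 2 * E ^ 2
      = (a1 * a2 + a3 * a4) * (a1 * a3 + a2 * a4) * (a1 * a4 + a2 * a3)
        * (16 * r1 * r2 * Q) ^ 2 := by
    subst_vars
    ring
  refine ⟨identity, fun hr1r2Q R hR => ?_⟩
  have hD : 16 * (r1 : ℚ) * r2 * Q ≠ 0 := by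
    rw [mul_assoc 16, mul_assoc 16]
    exact mul_ne_zero (by norm_num) (by exact_mod_cast hr1r2Q)
  rw [hR]
  refine sq_four_mul_mul_div_eq_of_mul_sq_eq hD ?_
  rw [mul_pow, ← mul_assoc]
  exact_mod_cast identity
end

section
/- Let r1, r2 be real numbers with r2 > 0 and 17/10 ≤ r1/r2 ≤ 2. Define a1 = (r1^2+r2^2)(r1^2-4r1r2+r2^2)(r1^6-4r1^5r2+19r1^4r2^2-40r1^3r2^3+19r1^2r2^4-4r1r2^5+r2^6); a2 = -(r1^2+r2^2)(r1^2-4r1r2+r2^2)(r1^6-8r1^5r2+35r1^4r2^2-48r1^3r2^3+35r1^2r2^4-8r1r2^5+r2^6); a3 = a4 = (r1-r2)^2(r1^8-8r1^7r2+36r1^6r2^2-88r1^5r2^3+198r1^4r2^4-88r1^3r2^5+36r1^2r2^6-8r1r2^7+r2^8); b1 = -(r1-r2)(r1^4-8r1^3r2+10r1^2r2^2+r2^4)(r1^5+r1^4r2-6r1^3r2^2+18r1^2r2^3-7r1r2^4+r2^5); b2 = (r1-r2)(r1^4+10r1^2r2^2-8r1r2^3+r2^4)(r1^5-7r1^4r2+18r1^3r2^2-6r1^2r2^3+r1r2^4+r2^5);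 b3 = b4 = (r1^2-4r1r2+r2^2)^2(r1^2+r2^2)^3. Then a1, a2, a3, a4, b1, b2, b3, b4 are all positive, each of a1, a2, a3, a4 is less than the sum of the other three, and each of b1, b2, b3, b4 is less than the sum of the other three. -/
set_option maxHeartbeats 1000000

theorem section21_quadrilateral_existence_conditions (r1 r2 : ℝ)
    (hr2 : 0 < r2) (hlo : 17 / 10 ≤ r1 / r2) (hhi : r1 / r2 ≤ 2)
    (a1 a2 a3 a4 b1 b2 b3 b4 : ℝ)
    (ha1 : a1 = (r1 ^ 2 + r2 ^ 2) * (r1 ^ 2 - 4 * r1 * r2 + r2 ^ 2)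
      * (r1 ^ 6 - 4 * r1 ^ 5 * r2 + 19 * r1 ^ 4 * r2 ^ 2 - 40 * r1 ^ 3 * r2 ^ 3
        + 19 * r1 ^ 2 * r2 ^ 4 - 4 * r1 * r2 ^ 5 + r2 ^ 6))
    (ha2 : a2 = -((r1 ^ 2 + r2 ^ 2) * (r1 ^ 2 - 4 * r1 * r2 + r2 ^ 2)
      * (r1 ^ 6 - 8 * r1 ^ 5 * r2 + 35 * r1 ^ 4 * r2 ^ 2 - 48 * r1 ^ 3 * r2 ^ 3
        + 35 * r1 ^ 2 * r2 ^ 4 - 8 * r1 * r2 ^ 5 + r2 ^ 6)))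
    (ha3 : a3 = (r1 - r2) ^ 2
      * (r1 ^ 8 - 8 * r1 ^ 7 * r2 + 36 * r1 ^ 6 * r2 ^ 2 - 88 * r1 ^ 5 * r2 ^ 3
        + 198 * r1 ^ 4 * r2 ^ 4 - 88 * r1 ^ 3 * r2 ^ 5 + 36 * r1 ^ 2 * r2 ^ 6
        - 8 * r1 * r2 ^ 7 + r2 ^ 8))
    (ha4 : a4 = a3)
    (hb1 : b1 = -((r1 - r2) * (r1 ^ 4 - 8 * r1 ^ 3 * r2 + 10 * r1 ^ 2 * r2 ^ 2 + r2 ^ 4)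
      * (r1 ^ 5 + r1 ^ 4 * r2 - 6 * r1 ^ 3 * r2 ^ 2 + 18 * r1 ^ 2 * r2 ^ 3
        - 7 * r1 * r2 ^ 4 + r2 ^ 5)))
    (hb2 : b2 = (r1 - r2) * (r1 ^ 4 + 10 * r1 ^ 2 * r2 ^ 2 - 8 * r1 * r2 ^ 3 + r2 ^ 4)
      * (r1 ^ 5 - 7 * r1 ^ 4 * r2 + 18 * r1 ^ 3 * r2 ^ 2 - 6 * r1 ^ 2 * r2 ^ 3
        + r1 * r2 ^ 4 + r2 ^ 5))
    (hb3 : b3 = (r1 ^ 2 - 4 * r1 * r2 + r2 ^ 2) ^ 2 * (r1 ^ 2 + r2 ^ 2) ^ 3)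
    (hb4 : b4 = b3)
    :
    (0 < a1 ∧ 0 < a2 ∧ 0 < a3 ∧ 0 < a4 ∧ 0 < b1 ∧ 0 < b2 ∧ 0 < b3 ∧ 0 < b4) ∧
    (a1 < a2 + a3 + a4 ∧ a2 < a1 + a3 + a4 ∧ a3 < a1 + a2 + a4 ∧ a4 < a1 + a2 + a3) ∧
    (b1 < b2 + b3 + b4 ∧ b2 < b1 + b3 + b4 ∧ b3 < b1 + b2 + b4 ∧ b4 < b1 + b2 + b3) := by
  have hr2' : r2 ≠ 0 := ne_of_gt hr2
  set t := r1 / r2 with htdef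
  have hr1 : r1 = t * r2 := (div_mul_cancel₀ r1 hr2').symm
  have hu : (0:ℝ) ≤ t - 17/10 := by linarith
  have hv : (0:ℝ) ≤ 2 - t := by linarith
  have h0 := mul_nonneg (pow_nonneg hu 0) (pow_nonneg hv 10)
  have h1 := mul_nonneg (pow_nonneg hu 1) (pow_nonneg hv 9)
  have h2 := mul_nonneg (pow_nonneg hu 2) (pow_nonneg hv 8)
  have h3 := mul_nonneg (pow_nonneg hu 3) (pow_nonneg hv 7)
  have h4 := mul_nonneg (pow_nonneg hu 4) (pow_nonneg hv 6)
  have h5 := mul_nonneg (pow_nonneg hu 5) (pow_nonneg hv 5)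
  have h6 := mul_nonneg (pow_nonneg hu 6) (pow_nonneg hv 4)
  have h7 := mul_nonneg (pow_nonneg hu 7) (pow_nonneg hv 3)
  have h8 := mul_nonneg (pow_nonneg hu 8) (pow_nonneg hv 2)
  have h9 := mul_nonneg (pow_nonneg hu 9) (pow_nonneg hv 1)
  have h10 := mul_nonneg (pow_nonneg hu 10) (pow_nonneg hv 0)
  have hr10 : (0:ℝ) < r2 ^ 10 := pow_pos hr2 10
  have pa1 : (0:ℝ) < (1) * t ^ 10 + (-8) * t ^ 9 + (37) * t ^ 8 + (-128) * t ^ 7 + (234) * t ^ 6 + (-240) * t ^ 5 + (234) * t ^ 4 + (-128) * t ^ 3 + (37) * t ^ 2 + (-8) * t ^ 1 + (1) := by linarith [h0, h1, h2, h3, h4, h5, h6, h7, h8, h9, h10]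
  have ea1 : a1 = r2 ^ 10 * ((1) * t ^ 10 + (-8) * t ^ 9 + (37) * t ^ 8 + (-128) * t ^ 7 + (234) * t ^ 6 + (-240) * t ^ 5 + (234) * t ^ 4 + (-128) * t ^ 3 + (37) * t ^ 2 + (-8) * t ^ 1 + (1)) := by rw [ha1, hr1]; ring
  have ga1 : 0 < a1 := by rw [ea1]; exact mul_pos hr10 pa1
  have pa2 : (0:ℝ) < (-1) * t ^ 10 + (12) * t ^ 9 + (-69) * t ^ 8 + (208) * t ^ 7 + (-330) * t ^ 6 + (392) * t ^ 5 + (-330) * t ^ 4 + (208) * t ^ 3 + (-69) * t ^ 2 + (12) * t ^ 1 + (-1) := by linarith [h0, h1, h2, h3, h4, h5, h6, h7, h8, h9, h10]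
  have ea2 : a2 = r2 ^ 10 * ((-1) * t ^ 10 + (12) * t ^ 9 + (-69) * t ^ 8 + (208) * t ^ 7 + (-330) * t ^ 6 + (392) * t ^ 5 + (-330) * t ^ 4 + (208) * t ^ 3 + (-69) * t ^ 2 + (12) * t ^ 1 + (-1)) := by rw [ha2, hr1]; ring
  have ga2 : 0 < a2 := by rw [ea2]; exact mul_pos hr10 pa2
  have pa3 : (0:ℝ) < (1) * t ^ 10 + (-10) * t ^ 9 + (53) * t ^ 8 + (-168) * t ^ 7 + (410) * t ^ 6 + (-572) * t ^ 5 + (410) * t ^ 4 + (-168) * t ^ 3 + (53) * t ^ 2 + (-10) * t ^ 1 + (1) := by linarith [h0, h1, h2, h3, h4, h5, h6, h7, h8, h9, h10]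
  have ea3 : a3 = r2 ^ 10 * ((1) * t ^ 10 + (-10) * t ^ 9 + (53) * t ^ 8 + (-168) * t ^ 7 + (410) * t ^ 6 + (-572) * t ^ 5 + (410) * t ^ 4 + (-168) * t ^ 3 + (53) * t ^ 2 + (-10) * t ^ 1 + (1)) := by rw [ha3, hr1]; ring
  have ga3 : 0 < a3 := by rw [ea3]; exact mul_pos hr10 pa3
  have pa4 : (0:ℝ) < (1) * t ^ 10 + (-10) * t ^ 9 + (53) * t ^ 8 + (-168) * t ^ 7 + (410) * t ^ 6 + (-572) * t ^ 5 + (410) * t ^ 4 + (-168) * t ^ 3 + (53) * t ^ 2 + (-10) * t ^ 1 + (1) := by linarith [h0, h1, h2, h3, h4, h5, h6, h7, h8, h9, h10]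
  have ea4 : a4 = r2 ^ 10 * ((1) * t ^ 10 + (-10) * t ^ 9 + (53) * t ^ 8 + (-168) * t ^ 7 + (410) * t ^ 6 + (-572) * t ^ 5 + (410) * t ^ 4 + (-168) * t ^ 3 + (53) * t ^ 2 + (-10) * t ^ 1 + (1)) := by rw [ha4, ha3, hr1]; ring
  have ga4 : 0 < a4 := by rw [ea4]; exact mul_pos hr10 pa4
  have pb1 : (0:ℝ) < (-1) * t ^ 10 + (8) * t ^ 9 + (-3) * t ^ 8 + (-80) * t ^ 7 + (286) * t ^ 6 + (-448) * t ^ 5 + (322) * t ^ 4 + (-112) * t ^ 3 + (35) * t ^ 2 + (-8) * t ^ 1 + (1) := by linarith [h0, h1, h2, h3, h4, h5, h6, h7, h8, h9, h10]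
  have eb1 : b1 = r2 ^ 10 * ((-1) * t ^ 10 + (8) * t ^ 9 + (-3) * t ^ 8 + (-80) * t ^ 7 + (286) * t ^ 6 + (-448) * t ^ 5 + (322) * t ^ 4 + (-112) * t ^ 3 + (35) * t ^ 2 + (-8) * t ^ 1 + (1)) := by rw [hb1, hr1]; ring
  have gb1 : 0 < b1 := by rw [eb1]; exact mul_pos hr10 pb1
  have pb2 : (0:ℝ) < (1) * t ^ 10 + (-8) * t ^ 9 + (35) * t ^ 8 + (-112) * t ^ 7 + (322) * t ^ 6 + (-448) * t ^ 5 + (286) * t ^ 4 + (-80) * t ^ 3 + (-3) * t ^ 2 + (8) * t ^ 1 + (-1) := by linarith [h0, h1, h2, h3, h4, h5, h6, h7, h8, h9, h10]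
  have eb2 : b2 = r2 ^ 10 * ((1) * t ^ 10 + (-8) * t ^ 9 + (35) * t ^ 8 + (-112) * t ^ 7 + (322) * t ^ 6 + (-448) * t ^ 5 + (286) * t ^ 4 + (-80) * t ^ 3 + (-3) * t ^ 2 + (8) * t ^ 1 + (-1)) := by rw [hb2, hr1]; ring
  have gb2 : 0 < b2 := by rw [eb2]; exact mul_pos hr10 pb2
  have pb3 : (0:ℝ) < (1) * t ^ 10 + (-8) * t ^ 9 + (21) * t ^ 8 + (-32) * t ^ 7 + (58) * t ^ 6 + (-48) * t ^ 5 + (58) * t ^ 4 + (-32) * t ^ 3 + (21) * t ^ 2 + (-8) * t ^ 1 + (1) := by linarith [h0, h1, h2, h3, h4, h5, h6, h7, h8, h9, h10]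
  have eb3 : b3 = r2 ^ 10 * ((1) * t ^ 10 + (-8) * t ^ 9 + (21) * t ^ 8 + (-32) * t ^ 7 + (58) * t ^ 6 + (-48) * t ^ 5 + (58) * t ^ 4 + (-32) * t ^ 3 + (21) * t ^ 2 + (-8) * t ^ 1 + (1)) := by rw [hb3, hr1]; ring
  have gb3 : 0 < b3 := by rw [eb3]; exact mul_pos hr10 pb3
  have pb4 : (0:ℝ) < (1) * t ^ 10 + (-8) * t ^ 9 + (21) * t ^ 8 + (-32) * t ^ 7 + (58) * t ^ 6 + (-48) * t ^ 5 + (58) * t ^ 4 + (-32) * t ^ 3 + (21) * t ^ 2 + (-8) * t ^ 1 + (1) := by linarith [h0, h1, h2, h3, h4, h5, h6, h7, h8, h9, h10]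
  have eb4 : b4 = r2 ^ 10 * ((1) * t ^ 10 + (-8) * t ^ 9 + (21) * t ^ 8 + (-32) * t ^ 7 + (58) * t ^ 6 + (-48) * t ^ 5 + (58) * t ^ 4 + (-32) * t ^ 3 + (21) * t ^ 2 + (-8) * t ^ 1 + (1)) := by rw [hb4, hb3, hr1]; ring
  have gb4 : 0 < b4 := by rw [eb4]; exact mul_pos hr10 pb4
  have pTa1 : (0:ℝ) < (256) * t ^ 6 + (-512) * t ^ 5 + (256) * t ^ 4 := by linarith [h0, h1, h2, h3, h4, h5, h6, h7, h8, h9, h10]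
  have eTa1 : a2+a3+a4 - a1 = r2 ^ 10 * ((256) * t ^ 6 + (-512) * t ^ 5 + (256) * t ^ 4) := by rw [ha1, ha2, ha4, ha3, hr1]; ring
  have gTa1 : a1 < a2+a3+a4 := by linarith [eTa1, mul_pos hr10 pTa1]
  have pTa2 : (0:ℝ) < (4) * t ^ 10 + (-40) * t ^ 9 + (212) * t ^ 8 + (-672) * t ^ 7 + (1384) * t ^ 6 + (-1776) * t ^ 5 + (1384) * t ^ 4 + (-672) * t ^ 3 + (212) * t ^ 2 + (-40) * t ^ 1 + (4) := by linarith [h0, h1, h2, h3, h4, h5, h6, h7, h8, h9, h10]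
  have eTa2 : a1+a3+a4 - a2 = r2 ^ 10 * ((4) * t ^ 10 + (-40) * t ^ 9 + (212) * t ^ 8 + (-672) * t ^ 7 + (1384) * t ^ 6 + (-1776) * t ^ 5 + (1384) * t ^ 4 + (-672) * t ^ 3 + (212) * t ^ 2 + (-40) * t ^ 1 + (4)) := by rw [ha1, ha2, ha4, ha3, hr1]; ring
  have gTa2 : a2 < a1+a3+a4 := by linarith [eTa2, mul_pos hr10 pTa2]
  have pTa3 : (0:ℝ) < (4) * t ^ 9 + (-32) * t ^ 8 + (80) * t ^ 7 + (-96) * t ^ 6 + (152) * t ^ 5 + (-96) * t ^ 4 + (80) * t ^ 3 + (-32) * t ^ 2 + (4) * t ^ 1 := by linarith [h0, h1, h2, h3, h4, h5, h6, h7, h8, h9, h10]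
  have eTa3 : a1+a2+a4 - a3 = r2 ^ 10 * ((4) * t ^ 9 + (-32) * t ^ 8 + (80) * t ^ 7 + (-96) * t ^ 6 + (152) * t ^ 5 + (-96) * t ^ 4 + (80) * t ^ 3 + (-32) * t ^ 2 + (4) * t ^ 1) := by rw [ha1, ha2, ha4, ha3, hr1]; ring
  have gTa3 : a3 < a1+a2+a4 := by linarith [eTa3, mul_pos hr10 pTa3]
  have pTa4 : (0:ℝ) < (4) * t ^ 9 + (-32) * t ^ 8 + (80) * t ^ 7 + (-96) * t ^ 6 + (152) * t ^ 5 + (-96) * t ^ 4 + (80) * t ^ 3 + (-32) * t ^ 2 + (4) * t ^ 1 := by linarith [h0, h1, h2, h3, h4, h5, h6, h7, h8, h9, h10]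
  have eTa4 : a1+a2+a3 - a4 = r2 ^ 10 * ((4) * t ^ 9 + (-32) * t ^ 8 + (80) * t ^ 7 + (-96) * t ^ 6 + (152) * t ^ 5 + (-96) * t ^ 4 + (80) * t ^ 3 + (-32) * t ^ 2 + (4) * t ^ 1) := by rw [ha1, ha2, ha4, ha3, hr1]; ring
  have gTa4 : a4 < a1+a2+a3 := by linarith [eTa4, mul_pos hr10 pTa4]
  have pTb1 : (0:ℝ) < (4) * t ^ 10 + (-32) * t ^ 9 + (80) * t ^ 8 + (-96) * t ^ 7 + (152) * t ^ 6 + (-96) * t ^ 5 + (80) * t ^ 4 + (-32) * t ^ 3 + (4) * t ^ 2 := by linarith [h0, h1, h2, h3, h4, h5, h6, h7, h8, h9, h10]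
  have eTb1 : b2+b3+b4 - b1 = r2 ^ 10 * ((4) * t ^ 10 + (-32) * t ^ 9 + (80) * t ^ 8 + (-96) * t ^ 7 + (152) * t ^ 6 + (-96) * t ^ 5 + (80) * t ^ 4 + (-32) * t ^ 3 + (4) * t ^ 2) := by rw [hb1, hb2, hb4, hb3, hr1]; ring
  have gTb1 : b1 < b2+b3+b4 := by linarith [eTb1, mul_pos hr10 pTb1]
  have pTb2 : (0:ℝ) < (4) * t ^ 8 + (-32) * t ^ 7 + (80) * t ^ 6 + (-96) * t ^ 5 + (152) * t ^ 4 + (-96) * t ^ 3 + (80) * t ^ 2 + (-32) * t ^ 1 + (4) := by linarith [h0, h1, h2, h3, h4, h5, h6, h7, h8, h9, h10]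
  have eTb2 : b1+b3+b4 - b2 = r2 ^ 10 * ((4) * t ^ 8 + (-32) * t ^ 7 + (80) * t ^ 6 + (-96) * t ^ 5 + (152) * t ^ 4 + (-96) * t ^ 3 + (80) * t ^ 2 + (-32) * t ^ 1 + (4)) := by rw [hb1, hb2, hb4, hb3, hr1]; ring
  have gTb2 : b2 < b1+b3+b4 := by linarith [eTb2, mul_pos hr10 pTb2]
  have pTb3 : (0:ℝ) < (32) * t ^ 8 + (-192) * t ^ 7 + (608) * t ^ 6 + (-896) * t ^ 5 + (608) * t ^ 4 + (-192) * t ^ 3 + (32) * t ^ 2 := by linarith [h0, h1, h2, h3, h4, h5, h6, h7, h8, h9, h10]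
  have eTb3 : b1+b2+b4 - b3 = r2 ^ 10 * ((32) * t ^ 8 + (-192) * t ^ 7 + (608) * t ^ 6 + (-896) * t ^ 5 + (608) * t ^ 4 + (-192) * t ^ 3 + (32) * t ^ 2) := by rw [hb1, hb2, hb4, hb3, hr1]; ring
  have gTb3 : b3 < b1+b2+b4 := by linarith [eTb3, mul_pos hr10 pTb3]
  have pTb4 : (0:ℝ) < (32) * t ^ 8 + (-192) * t ^ 7 + (608) * t ^ 6 + (-896) * t ^ 5 + (608) * t ^ 4 + (-192) * t ^ 3 + (32) * t ^ 2 := by linarith [h0, h1, h2, h3, h4, h5, h6, h7, h8, h9, h10]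
  have eTb4 : b1+b2+b3 - b4 = r2 ^ 10 * ((32) * t ^ 8 + (-192) * t ^ 7 + (608) * t ^ 6 + (-896) * t ^ 5 + (608) * t ^ 4 + (-192) * t ^ 3 + (32) * t ^ 2) := by rw [hb1, hb2, hb4, hb3, hr1]; ring
  have gTb4 : b4 < b1+b2+b3 := by linarith [eTb4, mul_pos hr10 pTb4]
  exact ⟨⟨ga1, ga2, ga3, ga4, gb1, gb2, gb3, gb4⟩, ⟨gTa1, gTa2, gTa3, gTa4⟩, ⟨gTb1, gTb2, gTb3, gTb4⟩⟩
end

section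
/- Let g, h, m, n, r1, r2 be elements of a commutative ring. Define x1 = g^2·r1·n·(r1-r2), x2 = -h^2·r2·(r1-r2)·(m-n), x3 = r2·n·(g^2·r1-h^2·r2), x4 = -r1·(g^2·r1-h^2·r2)·(m-n), y1 = -g^2·r1·(r1-r2)·(m-n), y2 = h^2·r2·n·(r1-r2), y3 = r1·n·(g^2·r1-h^2·r2), y4 = -r2·(g^2·r1-h^2·r2)·(m-n). Then x1+x2+x3+x4 = y1+y2+y3+y4 and x1·x2·x3·x4 = y1·y2·y3·y4 = K^2, where K = g·h·r1·r2·(m-n)·n·(r1-r2)·(g^2·r1-h^2·r2). -/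
theorem section22_equal_sums_square_products (R : Type*) [CommRing R]
    (g h m n r1 r2 : R)
    (x1 x2 x3 x4 y1 y2 y3 y4 K : R)
    (hx1 : x1 = g ^ 2 * r1 * n * (r1 - r2))
    (hx2 : x2 = -(h ^ 2) * r2 * (r1 - r2) * (m - n))
    (hx3 : x3 = r2 * n * (g ^ 2 * r1 - h ^ 2 * r2))
    (hx4 : x4 = -r1 * (g ^ 2 * r1 - h ^ 2 * r2) * (m - n))
    (hy1 : y1 = -(g ^ 2) * r1 * (r1 - r2) * (m - n))
    (hy2 : y2 = h ^ 2 * r2 * n * (r1 - r2))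
    (hy3 : y3 = r1 * n * (g ^ 2 * r1 - h ^ 2 * r2))
    (hy4 : y4 = -r2 * (g ^ 2 * r1 - h ^ 2 * r2) * (m - n))
    (hK : K = g * h * r1 * r2 * (m - n) * n * (r1 - r2) * (g ^ 2 * r1 - h ^ 2 * r2)) :
    x1 + x2 + x3 + x4 = y1 + y2 + y3 + y4 ∧
    x1 * x2 * x3 * x4 = K ^ 2 ∧
    y1 * y2 * y3 * y4 = K ^ 2 := by
  subst hx1 hx2 hx3 hx4 hy1 hy2 hy3 hy4 hK
  refine ⟨by ring, by ring, by ring⟩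
end

section
/- Let g, h, m, n, r1, r2 be elements of a commutative ring, and define x1 = g^2·r1·n·(r1-r2), x2 = -h^2·r2·(r1-r2)·(m-n), x3 = r2·n·(g^2·r1-h^2·r2), x4 = -r1·(g^2·r1-h^2·r2)·(m-n), y1 = -g^2·r1·(r1-r2)·(m-n), y2 = h^2·r2·n·(r1-r2), y3 = r1·n·(g^2·r1-h^2·r2), y4 = -r2·(g^2·r1-h^2·r2)·(m-n). Let C = (m-n)^2·n^2·r1^2·r2^2·(r1-r2)^2·(g^2·r1-h^2·r2)^2·(g^2·r1^2+h^2·r2^2)·(g^4·r1^2+g^2·h^2·r1^2-4·g^2·h^2·r1·r2+g^2·h^2·r2^2+h^4·r2^2). Then (x1·x2+x3·x4)(x1·x3+x2·x4)(x1·x4+x2·x3) = C·(g^2·n^2+h^2·(m-n)^2) and (y1·y2+y3·y4)(y1·y3+y2·y4)(y1·y4+y2·y3) = C·(g^2·(m-n)^2+h^2·n^2). -/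
theorem section22_diagonal_products (R : Type*) [CommRing R]
    (g h m n r1 r2 : R)
    (x1 x2 x3 x4 y1 y2 y3 y4 C : R)
    (hx1 : x1 = g ^ 2 * r1 * n * (r1 - r2))
    (hx2 : x2 = -(h ^ 2) * r2 * (r1 - r2) * (m - n))
    (hx3 : x3 = r2 * n * (g ^ 2 * r1 - h ^ 2 * r2))
    (hx4 : x4 = -r1 * (g ^ 2 * r1 - h ^ 2 * r2) * (m - n))
    (hy1 : y1 = -(g ^ 2) * r1 * (r1 - r2) * (m - n))
    (hy2 : y2 = h ^ 2 * r2 * n * (r1 - r2))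
    (hy3 : y3 = r1 * n * (g ^ 2 * r1 - h ^ 2 * r2))
    (hy4 : y4 = -r2 * (g ^ 2 * r1 - h ^ 2 * r2) * (m - n))
    (hC : C = (m - n) ^ 2 * n ^ 2 * r1 ^ 2 * r2 ^ 2 * (r1 - r2) ^ 2
      * (g ^ 2 * r1 - h ^ 2 * r2) ^ 2 * (g ^ 2 * r1 ^ 2 + h ^ 2 * r2 ^ 2)
      * (g ^ 4 * r1 ^ 2 + g ^ 2 * h ^ 2 * r1 ^ 2 - 4 * g ^ 2 * h ^ 2 * r1 * r2
        + g ^ 2 * h ^ 2 * r2 ^ 2 + h ^ 4 * r2 ^ 2)) :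
    (x1 * x2 + x3 * x4) * (x1 * x3 + x2 * x4) * (x1 * x4 + x2 * x3)
      = C * (g ^ 2 * n ^ 2 + h ^ 2 * (m - n) ^ 2) ∧
    (y1 * y2 + y3 * y4) * (y1 * y3 + y2 * y4) * (y1 * y4 + y2 * y3)
      = C * (g ^ 2 * (m - n) ^ 2 + h ^ 2 * n ^ 2) := by
  subst hx1 hx2 hx3 hx4 hy1 hy2 hy3 hy4 hC
  constructor <;> ring
end

section
/- Let t be a rational number with t ≠ 0 and t^4+6t^2-3 ≠ 0. Set u = t(t^4-2t^2+5), v = 5t^4-2t^2+1, X = (3t^4-6t^2-1)/(t(t^4+6t^2-3)), and Y = 4(t-1)(t+1)(t^2+1)^2(t^2+2t-1)(t^2-2t-1)(t^8+20t^6-26t^4+20t^2+1)/(t(t^4+6t^2-3)^2). Then Y^2 = (Xu-v)(Xu+v)(Xv-u)(Xv+u). -/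
/-!
Substituting the parametrisation, each of the four linear factors `X u ∓ v`, `X v ∓ u` of the
quartic becomes a product of the irreducible factors of `Y` over the common denominator
`t (t⁴ + 6t² - 3)`; each of those factors occurs an even number of times in the product of all
four, which is therefore the square of `Y`.
-/

namespace BrahmaguptaPoint

variable {K : Type*} [Field K] (t : K)

def u : K := t * (t ^ 4 - 2 * t ^ 2 + 5)

def v : K := 5 * t ^ 4 - 2 * t ^ 2 + 1

def den : K := t * (t ^ 4 + 6 * t ^ 2 - 3)

def X : K := (3 * t ^ 4 - 6 * t ^ 2 - 1) / den t

def octic : K := t ^ 8 + 20 * t ^ 6 - 26 * t ^ 4 + 20 * t ^ 2 + 1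

variable {t}

theorem X_mul_u_sub_v (h : den t ≠ 0) : X t * u t - v t = -2 * t * octic t / den t := by
  rw [X, div_mul_eq_mul_div, div_sub' h]
  congr 1
  simp only [u, v, den, octic]
  ring

theorem X_mul_u_add_v (h : den t ≠ 0) :
    X t * u t + v t = 8 * t * (t - 1) * (t + 1) * (t ^ 2 + 1) ^ 3 / den t := by
  rw [X, div_mul_eq_mul_div, div_add' _ _ _ h]
  congr 1
  simp only [u, v, den]
  ring

theorem X_mul_v_sub_u (h : den t ≠ 0) :
    X t * v t - u t = -((t ^ 2 + 1) * (t ^ 2 + 2 * t - 1) ^ 2 * (t ^ 2 - 2 * t - 1) ^ 2) / den t := by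
  rw [X, div_mul_eq_mul_div, div_sub' h]
  congr 1
  simp only [u, v, den]
  ring

theorem X_mul_v_add_u (h : den t ≠ 0) :
    X t * v t + u t = (t - 1) * (t + 1) * octic t / den t := by
  rw [X, div_mul_eq_mul_div, div_add' _ _ _ h]
  congr 1
  simp only [u, v, den, octic]
  ring

theorem quartic_eq_sq (ht : t ≠ 0) (ht' : t ^ 4 + 6 * t ^ 2 - 3 ≠ 0) :
    (X t * u t - v t) * (X t * u t + v t) * (X t * v t - u t) * (X t * v t + u t) =
      (4 * (t - 1) * (t + 1) * (t ^ 2 + 1) ^ 2 * (t ^ 2 + 2 * t - 1) * (t ^ 2 - 2 * t - 1)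
        * octic t / (t * (t ^ 4 + 6 * t ^ 2 - 3) ^ 2)) ^ 2 := by
  have h : den t ≠ 0 := mul_ne_zero ht ht'
  rw [X_mul_u_sub_v h, X_mul_u_add_v h, X_mul_v_sub_u h, X_mul_v_add_u h, den]
  field_simp
  ring

end BrahmaguptaPoint

theorem elliptic_curve_point (t : ℚ) (ht : t ≠ 0) (ht' : t ^ 4 + 6 * t ^ 2 - 3 ≠ 0)
    (u v X Y : ℚ)
    (hu : u = t * (t ^ 4 - 2 * t ^ 2 + 5))
    (hv : v = 5 * t ^ 4 - 2 * t ^ 2 + 1)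
    (hX : X = (3 * t ^ 4 - 6 * t ^ 2 - 1) / (t * (t ^ 4 + 6 * t ^ 2 - 3)))
    (hY : Y = 4 * (t - 1) * (t + 1) * (t ^ 2 + 1) ^ 2 * (t ^ 2 + 2 * t - 1)
      * (t ^ 2 - 2 * t - 1) * (t ^ 8 + 20 * t ^ 6 - 26 * t ^ 4 + 20 * t ^ 2 + 1)
      / (t * (t ^ 4 + 6 * t ^ 2 - 3) ^ 2)) :
    Y ^ 2 = (X * u - v) * (X * u + v) * (X * v - u) * (X * v + u) := by
  subst hu hv hX hY
  exact (BrahmaguptaPoint.quartic_eq_sq ht ht').symm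
end

section
/- Let t, w be elements of a commutative ring. Define g = (t^2+2t-1)(t^2-2t-1), h = -4t(t^2+1), m = t^5-3t^4+6t^3+6t^2-3t+1, n = (t^4+6t^2-3)·t, u = t(t^4-2t^2+5)·w, v = (5t^4-2t^2+1)·w. Then (mu-nu-nv)(mu-nu+nv)·g^2 - (mv+nu-nv)(mv-nu-nv)·h^2 = 0. -/
theorem section22_condition_satisfied (R : Type*) [CommRing R] (t w : R)
    (g h m n u v : R)
    (hg : g = (t ^ 2 + 2 * t - 1) * (t ^ 2 - 2 * t - 1))
    (hh : h = -4 * t * (t ^ 2 + 1))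
    (hm : m = t ^ 5 - 3 * t ^ 4 + 6 * t ^ 3 + 6 * t ^ 2 - 3 * t + 1)
    (hn : n = (t ^ 4 + 6 * t ^ 2 - 3) * t)
    (hu : u = t * (t ^ 4 - 2 * t ^ 2 + 5) * w)
    (hv : v = (5 * t ^ 4 - 2 * t ^ 2 + 1) * w) :
    (m * u - n * u - n * v) * (m * u - n * u + n * v) * g ^ 2
      - (m * v + n * u - n * v) * (m * v - n * u - n * v) * h ^ 2 = 0 := by
  subst hg hh hm hn hu hv; ring
end
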